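/- Let n, r be positive integers, λ > 0, Ω ⊆ {1,…,n}×{1,…,n}, and M ∈ ℝ^{n×n}. Let L_ncvx ∈ ℝ^{n×n} have rank r with compact SVD L_ncvx = UΣVᵀ and tangent space T, and suppose θ := ‖P_Ω(L_ncvx − M)‖_F > 0. Define R ∈ ℝ^{n×n} by θ^{−1}·P_Ω(L_ncvx − M) = −λ·(UVᵀ + R), set ρ = ‖P_T(R)‖_F, and assume ‖P_{T⊥}(R)‖ ≤ 1/2. Let L_cvx be any minimizer over L ∈ ℝ^{n×n} of F(L) = ‖P_Ω(L − M)‖_F + λ‖L‖_*, and set Δ = L_cvx − L_ncvx. Then (‖P_Ω(L_cvx − M)‖_F − ‖P_Ω(L_ncvx − M)‖_F)² ≤ λ²·(√r + 2ρ)²·‖P_T(Δ)‖_F². -/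

import Mathlib

open MeasureTheory ProbabilityTheory Matrix
open scoped ENNReal

noncomputable section

/-- Frobenius norm of a real matrix. -/
def frobNorm {n m : ℕ} (A : Matrix (Fin n) (Fin m) ℝ) : ℝ :=
  Real.sqrt (∑ i, ∑ j, (A i j) ^ 2)

/-- Entrywise sup norm (largest absolute value of an entry). -/
def infNorm {n m : ℕ} (A : Matrix (Fin n) (Fin m) ℝ) : ℝ :=
  ⨆ i, ⨆ j, |A i j|

/-- Largest Euclidean norm of a row. -/
def row2InfNorm {n m : ℕ} (A : Matrix (Fin n) (Fin m) ℝ) : ℝ :=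
  ⨆ i, Real.sqrt (∑ j, (A i j) ^ 2)

/-- The (unsorted) singular values of a real matrix: square roots of the
eigenvalues of `Aᵀ * A`. -/
def singVal {n m : ℕ} (A : Matrix (Fin n) (Fin m) ℝ) : Fin m → ℝ :=
  fun j => Real.sqrt (((show (Aᵀ * A).IsHermitian by simpa [Matrix.conjTranspose_eq_transpose_of_trivial] using Matrix.isHermitian_conjTranspose_mul_self A)).eigenvalues j)

/-- Spectral norm: the largest singular value. -/
def specNorm {n m : ℕ} (A : Matrix (Fin n) (Fin m) ℝ) : ℝ :=
  ⨆ j, singVal A j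

/-- Nuclear norm: the sum of the singular values. -/
def nucNorm {n m : ℕ} (A : Matrix (Fin n) (Fin m) ℝ) : ℝ :=
  ∑ j, singVal A j

open Classical in
/-- Projection onto the observed entries. -/
def POmega {n : ℕ} (S : Set (Fin n × Fin n)) (A : Matrix (Fin n) (Fin n) ℝ) :
    Matrix (Fin n) (Fin n) ℝ :=
  fun i j => if (i, j) ∈ S then A i j else 0

/-- Trace inner product of two real matrices. -/
def minner {n m : ℕ} (A B : Matrix (Fin n) (Fin m) ℝ) : ℝ :=
  ∑ i, ∑ j, A i j * B i j

/-- The square-root matrix completion objective. -/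
def sqF {n : ℕ} (S : Set (Fin n × Fin n)) (M : Matrix (Fin n) (Fin n) ℝ) (lam : ℝ)
    (L : Matrix (Fin n) (Fin n) ℝ) : ℝ :=
  frobNorm (POmega S (L - M)) + lam * nucNorm L

/-- `X`-gradient of the nonconvex objective `g`. -/
def gradX {n r : ℕ} (S : Set (Fin n × Fin n)) (M : Matrix (Fin n) (Fin n) ℝ) (lam : ℝ)
    (X Y : Matrix (Fin n) (Fin r) ℝ) : Matrix (Fin n) (Fin r) ℝ :=
  (frobNorm (POmega S (X * Yᵀ - M)))⁻¹ • (POmega S (X * Yᵀ - M) * Y) + lam • X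

/-- `Y`-gradient of the nonconvex objective `g`. -/
def gradY {n r : ℕ} (S : Set (Fin n × Fin n)) (M : Matrix (Fin n) (Fin n) ℝ) (lam : ℝ)
    (X Y : Matrix (Fin n) (Fin r) ℝ) : Matrix (Fin n) (Fin r) ℝ :=
  (frobNorm (POmega S (X * Yᵀ - M)))⁻¹ • ((POmega S (X * Yᵀ - M))ᵀ * X) + lam • Y

/-- Frobenius norm of the full gradient of `g`. -/
def gradNorm {n r : ℕ} (S : Set (Fin n × Fin n)) (M : Matrix (Fin n) (Fin n) ℝ) (lam : ℝ)
    (X Y : Matrix (Fin n) (Fin r) ℝ) : ℝ :=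
  Real.sqrt ((frobNorm (gradX S M lam X Y)) ^ 2 + (frobNorm (gradY S M lam X Y)) ^ 2)

/-- Orthogonal projection onto the tangent space `T = {U Aᵀ + B Vᵀ}` (for `U, V` with
orthonormal columns), with respect to the trace inner product. -/
def projT {n r : ℕ} (U V : Matrix (Fin n) (Fin r) ℝ) (A : Matrix (Fin n) (Fin n) ℝ) :
    Matrix (Fin n) (Fin n) ℝ :=
  U * Uᵀ * A + A * (V * Vᵀ) - U * Uᵀ * A * (V * Vᵀ)

/-- Orthogonal projection onto the orthogonal complement of the tangent space. -/
def projTperp {n r : ℕ} (U V : Matrix (Fin n) (Fin r) ℝ) (A : Matrix (Fin n) (Fin n) ℝ) :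
    Matrix (Fin n) (Fin n) ℝ :=
  A - projT U V A

open Classical in
/-- Indicator (as a real random variable) that an entry is observed. -/
def obsInd {n : ℕ} {Ω₀ : Type} (Obs : Ω₀ → Set (Fin n × Fin n)) (k : Fin n × Fin n)
    (ω : Ω₀) : ℝ :=
  if k ∈ Obs ω then 1 else 0

end

/-!
Write `θ₀ = ‖P_Ω(L_ncvx − M)‖_F`, `θ₁ = ‖P_Ω(L_cvx − M)‖_F` and `Δ = L_cvx − L_ncvx`.
At `L_ncvx` the map `L ↦ ‖P_Ω(L − M)‖_F` has gradient `θ₀⁻¹ P_Ω(L_ncvx − M) = −λ(UVᵀ + R)`, so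
convexity gives `θ₁ ≥ θ₀ − λ⟨UVᵀ + R, Δ⟩`. Conversely `UVᵀ + W`, with `W` the polar factor of
`P_{T⊥}Δ`, is a subgradient of the nuclear norm at `L_ncvx`, and minimality of `L_cvx` gives
`θ₁ ≤ θ₀ − λ(⟨UVᵀ, Δ⟩ + ‖P_{T⊥}Δ‖_*)`. Splitting `⟨R, Δ⟩` along `T ⊕ T⊥` and using
`‖P_{T⊥}R‖ ≤ 1/2`, the two bounds force `‖P_{T⊥}Δ‖_* ≤ 2ρ‖P_TΔ‖_F`; together with
`|⟨UVᵀ, Δ⟩| ≤ √r ‖P_TΔ‖_F` they squeeze `θ₁ − θ₀` into `±λ(√r + 2ρ)‖P_TΔ‖_F`.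
-/

section FrobeniusInner

variable {m n p : ℕ}

lemma frobNorm_nonneg (A : Matrix (Fin m) (Fin n) ℝ) : 0 ≤ frobNorm A := Real.sqrt_nonneg _

lemma minner_comm (A B : Matrix (Fin m) (Fin n) ℝ) : minner A B = minner B A := by
  simp only [minner, mul_comm]

lemma minner_add_left (A B C : Matrix (Fin m) (Fin n) ℝ) :
    minner (A + B) C = minner A C + minner B C := by
  simp only [minner, Matrix.add_apply, add_mul, Finset.sum_add_distrib]

lemma minner_add_right (A B C : Matrix (Fin m) (Fin n) ℝ) :
    minner A (B + C) = minner A B + minner A C := by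
  simp only [minner, Matrix.add_apply, mul_add, Finset.sum_add_distrib]

lemma minner_smul_left (t : ℝ) (A B : Matrix (Fin m) (Fin n) ℝ) :
    minner (t • A) B = t * minner A B := by
  simp only [minner, Matrix.smul_apply, smul_eq_mul, Finset.mul_sum, mul_assoc]

lemma minner_self (A : Matrix (Fin m) (Fin n) ℝ) : minner A A = frobNorm A ^ 2 := by
  rw [frobNorm, Real.sq_sqrt (by positivity)]
  simp only [minner, sq]

lemma minner_eq_sum_col (A B : Matrix (Fin m) (Fin n) ℝ) :
    minner A B = ∑ j, A.col j ⬝ᵥ B.col j := by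
  rw [minner, Finset.sum_comm]
  rfl

lemma minner_eq_trace (A B : Matrix (Fin m) (Fin n) ℝ) : minner A B = (Aᵀ * B).trace := by
  rw [minner_eq_sum_col]
  rfl

lemma minner_mul_left (X : Matrix (Fin m) (Fin n) ℝ) (B : Matrix (Fin n) (Fin p) ℝ)
    (C : Matrix (Fin m) (Fin p) ℝ) : minner (X * B) C = minner B (Xᵀ * C) := by
  rw [minner_eq_trace, minner_eq_trace, transpose_mul, Matrix.mul_assoc]

lemma minner_mul_right (B : Matrix (Fin m) (Fin n) ℝ) (Y : Matrix (Fin n) (Fin p) ℝ)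
    (C : Matrix (Fin m) (Fin p) ℝ) : minner (B * Y) C = minner B (C * Yᵀ) := by
  rw [minner_eq_trace, minner_eq_trace, transpose_mul, Matrix.mul_assoc, trace_mul_comm,
    Matrix.mul_assoc]

lemma minner_le_frobNorm_mul (A B : Matrix (Fin m) (Fin n) ℝ) :
    minner A B ≤ frobNorm A * frobNorm B := by
  simpa [minner, frobNorm, Fintype.sum_prod_type] using
    Real.sum_mul_le_sqrt_mul_sqrt Finset.univ (fun q : Fin m × Fin n => A q.1 q.2)
      (fun q => B q.1 q.2)

lemma abs_minner_le_frobNorm_mul (A B : Matrix (Fin m) (Fin n) ℝ) :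
    |minner A B| ≤ frobNorm A * frobNorm B := by
  refine abs_le.2 ⟨?_, minner_le_frobNorm_mul A B⟩
  have h := minner_le_frobNorm_mul (-A) B
  simp only [frobNorm, minner, Matrix.neg_apply, neg_mul, Finset.sum_neg_distrib, neg_sq] at h ⊢
  linarith

end FrobeniusInner

section DotProduct

variable {ι κ : Type*} [Fintype ι] [Fintype κ]

lemma mulVec_dotProduct_mulVec_of_transpose_mul_self [DecidableEq κ] {Q : Matrix ι κ ℝ}
    (hQ : Qᵀ * Q = 1) (x y : κ → ℝ) : (Q *ᵥ x) ⬝ᵥ (Q *ᵥ y) = x ⬝ᵥ y := by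
  rw [dotProduct_comm, ← dotProduct_transpose_mulVec, mulVec_mulVec, hQ, one_mulVec]

lemma dotProduct_le_mul_of_dotProduct_self_le {x y : ι → ℝ} {a b : ℝ} (ha : 0 ≤ a) (hb : 0 ≤ b)
    (hx : x ⬝ᵥ x ≤ a ^ 2) (hy : y ⬝ᵥ y ≤ b ^ 2) : x ⬝ᵥ y ≤ a * b := by
  have hcs := Real.sum_mul_le_sqrt_mul_sqrt Finset.univ x y
  have hx' : √(∑ i, x i ^ 2) ≤ a := by
    simp only [sq] at hx ⊢
    exact (Real.sqrt_le_sqrt hx).trans_eq (Real.sqrt_mul_self ha)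
  have hy' : √(∑ i, y i ^ 2) ≤ b := by
    simp only [sq] at hy ⊢
    exact (Real.sqrt_le_sqrt hy).trans_eq (Real.sqrt_mul_self hb)
  exact hcs.trans (mul_le_mul hx' hy' (Real.sqrt_nonneg _) ha)

lemma dotProduct_conj_diagonal_mulVec [DecidableEq κ] (Q : Matrix ι κ ℝ) (f : κ → ℝ) (v : ι → ℝ) :
    v ⬝ᵥ ((Q * diagonal f * Qᵀ) *ᵥ v) = ∑ j, f j * (Qᵀ *ᵥ v) j ^ 2 := by
  rw [← mulVec_mulVec, ← mulVec_mulVec, dotProduct_mulVec, ← mulVec_transpose]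
  simp only [dotProduct, mulVec_diagonal]
  exact Finset.sum_congr rfl fun j _ => by ring

end DotProduct

section Columns

variable {ι κ μ : Type*} [Fintype ι]

lemma transpose_mul_apply_eq_col_dotProduct (A : Matrix ι κ ℝ) (B : Matrix ι μ ℝ) (j : κ) (k : μ) :
    (Aᵀ * B) j k = A.col j ⬝ᵥ B.col k := rfl

lemma col_mul (A : Matrix κ ι ℝ) (B : Matrix ι μ ℝ) (j : μ) : (A * B).col j = A *ᵥ B.col j :=
  rfl

end Columns

section Gram

variable {d e : ℕ}

lemma isHermitian_transpose_mul_self (A : Matrix (Fin d) (Fin e) ℝ) : (Aᵀ * A).IsHermitian := by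
  simpa [conjTranspose_eq_transpose_of_trivial] using isHermitian_conjTranspose_mul_self A

noncomputable def gramEigvec (A : Matrix (Fin d) (Fin e) ℝ) : Matrix (Fin e) (Fin e) ℝ :=
  (isHermitian_transpose_mul_self A).eigenvectorUnitary

noncomputable def gramEigval (A : Matrix (Fin d) (Fin e) ℝ) : Fin e → ℝ :=
  (isHermitian_transpose_mul_self A).eigenvalues

variable (A : Matrix (Fin d) (Fin e) ℝ)

lemma gramEigval_nonneg (j : Fin e) : 0 ≤ gramEigval A j :=
  eigenvalues_conjTranspose_mul_self_nonneg A j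

lemma singVal_eq_sqrt_gramEigval (j : Fin e) : singVal A j = √(gramEigval A j) := rfl

lemma gramEigvec_transpose_mul_self : (gramEigvec A)ᵀ * gramEigvec A = 1 := by
  simpa [gramEigvec, star_eq_conjTranspose, conjTranspose_eq_transpose_of_trivial] using
    mem_unitaryGroup_iff'.mp (isHermitian_transpose_mul_self A).eigenvectorUnitary.2

lemma gramEigvec_mul_transpose_self : gramEigvec A * (gramEigvec A)ᵀ = 1 := by
  simpa [gramEigvec, star_eq_conjTranspose, conjTranspose_eq_transpose_of_trivial] using
    mem_unitaryGroup_iff.mp (isHermitian_transpose_mul_self A).eigenvectorUnitary.2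

lemma transpose_mul_self_eq_spectral :
    Aᵀ * A = gramEigvec A * diagonal (gramEigval A) * (gramEigvec A)ᵀ := by
  simpa [gramEigvec, gramEigval, star_eq_conjTranspose, conjTranspose_eq_transpose_of_trivial,
    Function.comp_def] using (isHermitian_transpose_mul_self A).spectral_theorem

lemma mulVec_dotProduct_self_eq (v : Fin e → ℝ) :
    (A *ᵥ v) ⬝ᵥ (A *ᵥ v) = ∑ j, gramEigval A j * ((gramEigvec A)ᵀ *ᵥ v) j ^ 2 := by
  rw [dotProduct_comm, ← dotProduct_transpose_mulVec, mulVec_mulVec, transpose_mul_self_eq_spectral,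
    dotProduct_conj_diagonal_mulVec]

lemma transpose_mulVec_gramEigvec_dotProduct_self (v : Fin e → ℝ) :
    ((gramEigvec A)ᵀ *ᵥ v) ⬝ᵥ ((gramEigvec A)ᵀ *ᵥ v) = v ⬝ᵥ v :=
  mulVec_dotProduct_mulVec_of_transpose_mul_self
    (by rw [transpose_transpose, gramEigvec_mul_transpose_self]) v v

lemma gram_mul_gramEigvec :
    (A * gramEigvec A)ᵀ * (A * gramEigvec A) = diagonal (gramEigval A) := by
  rw [transpose_mul, Matrix.mul_assoc, ← Matrix.mul_assoc Aᵀ, transpose_mul_self_eq_spectral]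
  simp only [← Matrix.mul_assoc, gramEigvec_transpose_mul_self, Matrix.one_mul]
  rw [Matrix.mul_assoc, gramEigvec_transpose_mul_self, Matrix.mul_one]

lemma col_mul_gramEigvec_dotProduct_self (j : Fin e) :
    (A * gramEigvec A).col j ⬝ᵥ (A * gramEigvec A).col j = gramEigval A j := by
  rw [← transpose_mul_apply_eq_col_dotProduct, gram_mul_gramEigvec, diagonal_apply_eq]

end Gram

section SpectralNorm

variable {d e : ℕ}

lemma specNorm_nonneg (A : Matrix (Fin d) (Fin e) ℝ) : 0 ≤ specNorm A :=
  Real.iSup_nonneg fun _ => Real.sqrt_nonneg _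

lemma singVal_le_specNorm (A : Matrix (Fin d) (Fin e) ℝ) (j : Fin e) : singVal A j ≤ specNorm A :=
  le_ciSup (Set.finite_range (singVal A)).bddAbove j

lemma gramEigval_le_specNorm_sq (A : Matrix (Fin d) (Fin e) ℝ) (j : Fin e) :
    gramEigval A j ≤ specNorm A ^ 2 := by
  rw [← Real.sq_sqrt (gramEigval_nonneg A j), ← singVal_eq_sqrt_gramEigval]
  exact pow_le_pow_left₀ (Real.sqrt_nonneg _) (singVal_le_specNorm A j) 2

lemma mulVec_dotProduct_self_le (A : Matrix (Fin d) (Fin e) ℝ) (v : Fin e → ℝ) :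
    (A *ᵥ v) ⬝ᵥ (A *ᵥ v) ≤ specNorm A ^ 2 * (v ⬝ᵥ v) := by
  rw [mulVec_dotProduct_self_eq, ← transpose_mulVec_gramEigvec_dotProduct_self A v,
    dotProduct, Finset.mul_sum]
  exact Finset.sum_le_sum fun j _ => by
    rw [← sq]
    exact mul_le_mul_of_nonneg_right (gramEigval_le_specNorm_sq A j) (sq_nonneg _)

lemma minner_le_mul_nucNorm {Z A : Matrix (Fin d) (Fin e) ℝ} {c : ℝ} (hc : 0 ≤ c)
    (hZ : ∀ v, (Z *ᵥ v) ⬝ᵥ (Z *ᵥ v) ≤ c ^ 2 * (v ⬝ᵥ v)) : minner Z A ≤ c * nucNorm A := by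
  set Q := gramEigvec A
  have hrot : minner (Z * Q) (A * Q) = minner Z A := by
    rw [minner_mul_right, Matrix.mul_assoc, gramEigvec_mul_transpose_self, Matrix.mul_one]
  have hQcol : ∀ j, Q.col j ⬝ᵥ Q.col j = 1 := fun j => by
    rw [← transpose_mul_apply_eq_col_dotProduct, gramEigvec_transpose_mul_self, one_apply_eq]
  rw [← hrot, minner_eq_sum_col, nucNorm, Finset.mul_sum]
  refine Finset.sum_le_sum fun j _ => dotProduct_le_mul_of_dotProduct_self_le hc
    (Real.sqrt_nonneg _) ?_ ?_
  · rw [col_mul]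
    simpa [hQcol j] using hZ (Q.col j)
  · rw [singVal_eq_sqrt_gramEigval, Real.sq_sqrt (gramEigval_nonneg A j),
      col_mul_gramEigvec_dotProduct_self]

lemma minner_le_specNorm_mul_nucNorm (Z A : Matrix (Fin d) (Fin e) ℝ) :
    minner Z A ≤ specNorm Z * nucNorm A :=
  minner_le_mul_nucNorm (specNorm_nonneg Z) (mulVec_dotProduct_self_le Z)

lemma nucNorm_nonneg (A : Matrix (Fin d) (Fin e) ℝ) : 0 ≤ nucNorm A :=
  Finset.sum_nonneg fun _ _ => Real.sqrt_nonneg _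

end SpectralNorm

section PolarFactor

variable {d e : ℕ}

/-- The partial isometry `A (Aᵀ A)^{-1/2}`, i.e. `P Qᵀ` for an SVD `A = P Σ Qᵀ`; since
`(√0)⁻¹ = 0` in Lean, it vanishes on the kernel of `A`. -/
noncomputable def polarFactor (A : Matrix (Fin d) (Fin e) ℝ) : Matrix (Fin d) (Fin e) ℝ :=
  A * gramEigvec A * diagonal (fun j => (√(gramEigval A j))⁻¹) * (gramEigvec A)ᵀ

variable (A : Matrix (Fin d) (Fin e) ℝ)

lemma minner_polarFactor_self : minner (polarFactor A) A = nucNorm A := by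
  rw [polarFactor, minner_mul_right, transpose_transpose, minner_mul_right, minner_eq_trace,
    diagonal_transpose, ← Matrix.mul_assoc, gram_mul_gramEigvec, diagonal_mul_diagonal,
    trace_diagonal, nucNorm]
  exact Finset.sum_congr rfl fun j _ => by
    rw [singVal_eq_sqrt_gramEigval, ← div_eq_mul_inv, Real.div_sqrt]

lemma polarFactor_mulVec_dotProduct_self_le (v : Fin e → ℝ) :
    (polarFactor A *ᵥ v) ⬝ᵥ (polarFactor A *ᵥ v) ≤ v ⬝ᵥ v := by
  set Q := gramEigvec A
  set c := Qᵀ *ᵥ v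
  have hQc : Qᵀ *ᵥ (Q *ᵥ (diagonal (fun j => (√(gramEigval A j))⁻¹) *ᵥ c)) =
      diagonal (fun j => (√(gramEigval A j))⁻¹) *ᵥ c := by
    rw [mulVec_mulVec, gramEigvec_transpose_mul_self, one_mulVec]
  rw [polarFactor, ← mulVec_mulVec, ← mulVec_mulVec, ← mulVec_mulVec,
    mulVec_dotProduct_self_eq, hQc, ← transpose_mulVec_gramEigvec_dotProduct_self A v]
  refine Finset.sum_le_sum fun j _ => ?_
  have hd : gramEigval A j * ((√(gramEigval A j))⁻¹) ^ 2 ≤ 1 := by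
    rw [inv_pow, Real.sq_sqrt (gramEigval_nonneg A j), ← div_eq_mul_inv]
    exact div_self_le_one _
  rw [mulVec_diagonal, mul_pow, ← mul_assoc, sq (c j)]
  exact mul_le_of_le_one_left (mul_self_nonneg _) hd

lemma polarFactor_eq_mul_transpose_mul_self :
    polarFactor A = A * (gramEigvec A * diagonal (fun j => (√(gramEigval A j))⁻¹ / gramEigval A j) *
      (gramEigvec A)ᵀ) * (Aᵀ * A) := by
  rw [transpose_mul_self_eq_spectral, polarFactor]
  simp only [Matrix.mul_assoc]
  rw [← Matrix.mul_assoc (gramEigvec A)ᵀ, gramEigvec_transpose_mul_self, Matrix.one_mul,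
    ← Matrix.mul_assoc (diagonal _), diagonal_mul_diagonal]
  congr 4
  exact funext fun j =>
    (div_mul_cancel_of_imp fun h => by rw [h, Real.sqrt_zero, _root_.inv_zero]).symm

lemma mul_polarFactor_eq_zero {m : ℕ} {C : Matrix (Fin m) (Fin d) ℝ} (hCA : C * A = 0) :
    C * polarFactor A = 0 := by
  rw [polarFactor, Matrix.mul_assoc, Matrix.mul_assoc, ← Matrix.mul_assoc C, hCA, Matrix.zero_mul]

lemma polarFactor_mul_eq_zero {m : ℕ} {B : Matrix (Fin e) (Fin m) ℝ} (hAB : A * B = 0) :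
    polarFactor A * B = 0 := by
  rw [polarFactor_eq_mul_transpose_mul_self]
  simp only [Matrix.mul_assoc, hAB, Matrix.mul_zero]

end PolarFactor

section SVD

variable {m n r : ℕ} {U : Matrix (Fin m) (Fin r) ℝ} {V : Matrix (Fin n) (Fin r) ℝ}

lemma minner_svd_left (U : Matrix (Fin m) (Fin r) ℝ) (s : Fin r → ℝ) (V : Matrix (Fin n) (Fin r) ℝ)
    (X : Matrix (Fin m) (Fin n) ℝ) :
    minner (U * diagonal s * Vᵀ) X = ∑ i, s i * (Uᵀ * X * V) i i := by
  rw [minner_mul_right, transpose_transpose, minner_mul_left, ← Matrix.mul_assoc]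
  simp [minner, diagonal_apply, ite_mul]

lemma col_dotProduct_col_self (hU : Uᵀ * U = 1) (i : Fin r) : U.col i ⬝ᵥ U.col i = 1 := by
  rw [← transpose_mul_apply_eq_col_dotProduct, hU, one_apply_eq]

lemma minner_svd_le_sum (hU : Uᵀ * U = 1) (hV : Vᵀ * V = 1) {s : Fin r → ℝ} (hs : ∀ i, 0 ≤ s i)
    {W : Matrix (Fin m) (Fin n) ℝ} (hW : ∀ v, (W *ᵥ v) ⬝ᵥ (W *ᵥ v) ≤ v ⬝ᵥ v) :
    minner (U * diagonal s * Vᵀ) W ≤ ∑ i, s i := by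
  rw [minner_svd_left]
  refine Finset.sum_le_sum fun i _ => mul_le_of_le_one_right (hs i) ?_
  rw [Matrix.mul_assoc, transpose_mul_apply_eq_col_dotProduct, col_mul]
  simpa using dotProduct_le_mul_of_dotProduct_self_le zero_le_one zero_le_one
    (by rw [one_pow]; exact (col_dotProduct_col_self hU i).le)
    (by simpa [col_dotProduct_col_self hV i] using hW (V.col i))

lemma nucNorm_svd_le (hU : Uᵀ * U = 1) (hV : Vᵀ * V = 1) {s : Fin r → ℝ} (hs : ∀ i, 0 ≤ s i) :
    nucNorm (U * diagonal s * Vᵀ) ≤ ∑ i, s i := by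
  rw [← minner_polarFactor_self, minner_comm]
  exact minner_svd_le_sum hU hV hs (polarFactor_mulVec_dotProduct_self_le _)

lemma minner_mul_transpose_svd (hU : Uᵀ * U = 1) (hV : Vᵀ * V = 1) (s : Fin r → ℝ) :
    minner (U * Vᵀ) (U * diagonal s * Vᵀ) = ∑ i, s i := by
  rw [minner_comm, minner_svd_left, ← Matrix.mul_assoc, hU, Matrix.one_mul, hV]
  simp

lemma mul_transpose_add_mulVec_dotProduct_self_le (hU : Uᵀ * U = 1) (hV : Vᵀ * V = 1)
    {W : Matrix (Fin m) (Fin n) ℝ} (hUW : Uᵀ * W = 0) (hWV : W * V = 0)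
    (hW : ∀ v, (W *ᵥ v) ⬝ᵥ (W *ᵥ v) ≤ v ⬝ᵥ v) (v : Fin n → ℝ) :
    ((U * Vᵀ + W) *ᵥ v) ⬝ᵥ ((U * Vᵀ + W) *ᵥ v) ≤ v ⬝ᵥ v := by
  set c := Vᵀ *ᵥ v
  have hcross : (U *ᵥ c) ⬝ᵥ (W *ᵥ v) = 0 := by
    rw [dotProduct_comm, ← dotProduct_transpose_mulVec, mulVec_mulVec, hUW, zero_mulVec,
      dotProduct_zero]
  have hWv : W *ᵥ (v - V *ᵥ c) = W *ᵥ v := by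
    rw [mulVec_sub, mulVec_mulVec, hWV, zero_mulVec, sub_zero]
  have hVc : v ⬝ᵥ (V *ᵥ c) = c ⬝ᵥ c := by
    rw [dotProduct_mulVec, ← mulVec_transpose]
  have hrest : (v - V *ᵥ c) ⬝ᵥ (v - V *ᵥ c) = v ⬝ᵥ v - c ⬝ᵥ c := by
    rw [sub_dotProduct, dotProduct_sub, dotProduct_sub, hVc, dotProduct_comm (V *ᵥ c), hVc,
      mulVec_dotProduct_mulVec_of_transpose_mul_self hV]
    ring
  have hW' := hW (v - V *ᵥ c)
  rw [hWv, hrest] at hW'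
  rw [add_mulVec, ← mulVec_mulVec, add_dotProduct, dotProduct_add, dotProduct_add,
    mulVec_dotProduct_mulVec_of_transpose_mul_self hU, hcross, dotProduct_comm (W *ᵥ v), hcross]
  linarith

end SVD

section TangentSpace

variable {n r : ℕ} {U V : Matrix (Fin n) (Fin r) ℝ}

lemma projT_add_projTperp (U V : Matrix (Fin n) (Fin r) ℝ) (X : Matrix (Fin n) (Fin n) ℝ) :
    projT U V X + projTperp U V X = X :=
  add_sub_cancel _ _

lemma transpose_mul_projTperp (hU : Uᵀ * U = 1) (X : Matrix (Fin n) (Fin n) ℝ) :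
    Uᵀ * projTperp U V X = 0 := by
  simp only [projTperp, projT, Matrix.mul_sub, Matrix.mul_add, ← Matrix.mul_assoc, hU,
    Matrix.one_mul]
  abel

lemma projTperp_mul (hV : Vᵀ * V = 1) (X : Matrix (Fin n) (Fin n) ℝ) :
    projTperp U V X * V = 0 := by
  simp only [projTperp, projT, Matrix.sub_mul, Matrix.add_mul, Matrix.mul_assoc, hV,
    Matrix.mul_one]
  abel

lemma minner_projT_eq_zero {W : Matrix (Fin n) (Fin n) ℝ} (hUW : Uᵀ * W = 0) (hWV : W * V = 0)
    (X : Matrix (Fin n) (Fin n) ℝ) : minner W (projT U V X) = 0 := by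
  have hU : ∀ Y : Matrix (Fin r) (Fin n) ℝ, minner W (U * Y) = 0 := fun Y => by
    rw [minner_comm, minner_mul_left, hUW]
    simp [minner]
  have hV : ∀ Y : Matrix (Fin n) (Fin n) ℝ, minner W (Y * (V * Vᵀ)) = 0 := fun Y => by
    rw [minner_comm, ← Matrix.mul_assoc, minner_mul_right, transpose_transpose,
      minner_mul_right, hWV]
    simp [minner]
  rw [projT, sub_eq_add_neg, minner_add_right, minner_add_right, ← Matrix.neg_mul,
    Matrix.mul_assoc U, hU, hV, hV]
  simp

lemma minner_projTperp_projT (hU : Uᵀ * U = 1) (hV : Vᵀ * V = 1)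
    (X Y : Matrix (Fin n) (Fin n) ℝ) : minner (projTperp U V Y) (projT U V X) = 0 :=
  minner_projT_eq_zero (transpose_mul_projTperp hU Y) (projTperp_mul hV Y) X

lemma minner_eq_add_projT_projTperp (hU : Uᵀ * U = 1) (hV : Vᵀ * V = 1)
    (X Y : Matrix (Fin n) (Fin n) ℝ) :
    minner X Y =
      minner (projT U V X) (projT U V Y) + minner (projTperp U V X) (projTperp U V Y) := by
  conv_lhs => rw [← projT_add_projTperp U V X, ← projT_add_projTperp U V Y]
  rw [minner_add_left, minner_add_right, minner_add_right, minner_projTperp_projT hU hV,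
    minner_comm (projT U V X) (projTperp U V Y), minner_projTperp_projT hU hV]
  ring

lemma minner_mul_transpose_projTperp (hU : Uᵀ * U = 1) (X : Matrix (Fin n) (Fin n) ℝ) :
    minner (U * Vᵀ) (projTperp U V X) = 0 := by
  rw [minner_mul_left, transpose_mul_projTperp hU]
  simp [minner]

lemma frobNorm_mul_transpose (hU : Uᵀ * U = 1) (hV : Vᵀ * V = 1) : frobNorm (U * Vᵀ) = √r := by
  rw [← Real.sqrt_sq (frobNorm_nonneg _), ← minner_self, minner_mul_left, ← Matrix.mul_assoc, hU,
    Matrix.one_mul, minner_eq_trace, transpose_transpose, trace_mul_comm, hV, trace_one,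
    Fintype.card_fin]

lemma abs_minner_mul_transpose_le (hU : Uᵀ * U = 1) (hV : Vᵀ * V = 1)
    (X : Matrix (Fin n) (Fin n) ℝ) : |minner (U * Vᵀ) X| ≤ √r * frobNorm (projT U V X) := by
  conv_lhs => rw [← projT_add_projTperp U V X]
  rw [minner_add_right, minner_mul_transpose_projTperp hU, add_zero,
    ← frobNorm_mul_transpose hU hV]
  exact abs_minner_le_frobNorm_mul _ _

lemma nucNorm_add_minner_add_nucNorm_projTperp_le (hU : Uᵀ * U = 1) (hV : Vᵀ * V = 1)
    {s : Fin r → ℝ} (hs : ∀ i, 0 ≤ s i) (Δ : Matrix (Fin n) (Fin n) ℝ) :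
    nucNorm (U * diagonal s * Vᵀ) + minner (U * Vᵀ) Δ + nucNorm (projTperp U V Δ) ≤
      nucNorm (U * diagonal s * Vᵀ + Δ) := by
  set W := polarFactor (projTperp U V Δ)
  have hUW : Uᵀ * W = 0 := mul_polarFactor_eq_zero _ (transpose_mul_projTperp hU Δ)
  have hWV : W * V = 0 := polarFactor_mul_eq_zero _ (projTperp_mul hV Δ)
  have hWL : minner W (U * diagonal s * Vᵀ) = 0 := by
    rw [minner_comm, minner_svd_left, hUW]
    simp
  have hWΔ : minner W Δ = nucNorm (projTperp U V Δ) := by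
    conv_lhs => rw [← projT_add_projTperp U V Δ]
    rw [minner_add_right, minner_projT_eq_zero hUW hWV, minner_polarFactor_self, zero_add]
  calc nucNorm (U * diagonal s * Vᵀ) + minner (U * Vᵀ) Δ + nucNorm (projTperp U V Δ)
      ≤ ∑ i, s i + minner (U * Vᵀ) Δ + minner W Δ := by
        rw [hWΔ]; gcongr; exact nucNorm_svd_le hU hV hs
    _ = minner (U * Vᵀ + W) (U * diagonal s * Vᵀ + Δ) := by
        rw [minner_add_left, minner_add_right, minner_add_right, hWL,
          minner_mul_transpose_svd hU hV]
        ring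
    _ ≤ 1 * nucNorm (U * diagonal s * Vᵀ + Δ) :=
        minner_le_mul_nucNorm zero_le_one fun v => by
          simpa using mul_transpose_add_mulVec_dotProduct_self_le hU hV hUW hWV
            (polarFactor_mulVec_dotProduct_self_le _) v
    _ = nucNorm (U * diagonal s * Vᵀ + Δ) := one_mul _

end TangentSpace

section DataFit

variable {n : ℕ} (S : Set (Fin n × Fin n))

lemma POmega_add (X Y : Matrix (Fin n) (Fin n) ℝ) :
    POmega S (X + Y) = POmega S X + POmega S Y := by
  ext i j
  by_cases h : (i, j) ∈ S <;> simp [POmega, h]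

lemma minner_POmega_POmega (X Y : Matrix (Fin n) (Fin n) ℝ) :
    minner (POmega S X) (POmega S Y) = minner (POmega S X) Y := by
  refine Finset.sum_congr rfl fun i _ => Finset.sum_congr rfl fun j _ => ?_
  by_cases h : (i, j) ∈ S <;> simp [POmega, h]

lemma frobNorm_POmega_add_minner_le {M L₀ L₁ G : Matrix (Fin n) (Fin n) ℝ}
    (hθ : 0 < frobNorm (POmega S (L₀ - M)))
    (hG : (frobNorm (POmega S (L₀ - M)))⁻¹ • POmega S (L₀ - M) = G) :
    frobNorm (POmega S (L₀ - M)) + minner G (L₁ - L₀) ≤ frobNorm (POmega S (L₁ - M)) := by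
  set X := POmega S (L₀ - M)
  set θ := frobNorm X
  have hsplit : minner X (L₁ - L₀) = minner X (POmega S (L₁ - M)) - θ ^ 2 := by
    rw [← minner_POmega_POmega, ← minner_self, eq_sub_iff_add_eq, ← minner_add_right,
      ← POmega_add, sub_add_sub_cancel]
  rw [← hG, minner_smul_left, hsplit, mul_sub, sq, ← mul_assoc, inv_mul_cancel₀ hθ.ne',
    one_mul, add_sub_cancel, inv_mul_le_iff₀ hθ]
  exact minner_le_frobNorm_mul _ _

end DataFit

theorem sqrtMC_data_fit_change_bound_general (n r : ℕ) (lam : ℝ)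
    (hlam : 0 < lam) (Ω : Set (Fin n × Fin n)) (M : Matrix (Fin n) (Fin n) ℝ)
    (U V : Matrix (Fin n) (Fin r) ℝ) (Sg : Fin r → ℝ)
    (Lncvx R Lcvx : Matrix (Fin n) (Fin n) ℝ)
    -- compact SVD of `L_ncvx` (in particular it has rank `r`)
    (hSVD : Lncvx = U * Matrix.diagonal Sg * Vᵀ)
    (hU : Uᵀ * U = 1) (hV : Vᵀ * V = 1) (hSg : ∀ i, 0 < Sg i)
    -- positive residual `θ` and definition of `R`
    (hθ : 0 < frobNorm (POmega Ω (Lncvx - M)))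
    (hR : (frobNorm (POmega Ω (Lncvx - M)))⁻¹ • POmega Ω (Lncvx - M) =
      (-lam) • (U * Vᵀ + R))
    (hRperp : specNorm (projTperp U V R) ≤ 1 / 2)
    -- `L_cvx` minimizes the convex objective `F`
    (hmin : ∀ L : Matrix (Fin n) (Fin n) ℝ, sqF Ω M lam Lcvx ≤ sqF Ω M lam L) :
    (frobNorm (POmega Ω (Lcvx - M)) - frobNorm (POmega Ω (Lncvx - M))) ^ 2 ≤
      lam ^ 2 * (Real.sqrt r + 2 * frobNorm (projT U V R)) ^ 2 *
        frobNorm (projT U V (Lcvx - Lncvx)) ^ 2 := by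
  set Δ := Lcvx - Lncvx
  have hupper : frobNorm (POmega Ω (Lcvx - M)) ≤ frobNorm (POmega Ω (Lncvx - M)) -
      lam * (minner (U * Vᵀ) Δ + nucNorm (projTperp U V Δ)) := by
    have hsub := nucNorm_add_minner_add_nucNorm_projTperp_le hU hV (fun i => (hSg i).le) Δ
    rw [← hSVD, add_sub_cancel] at hsub
    have hF := hmin Lncvx
    simp only [sqF] at hF
    nlinarith
  have hlower := frobNorm_POmega_add_minner_le Ω (L₁ := Lcvx) hθ hR
  rw [minner_smul_left, minner_add_left, minner_eq_add_projT_projTperp hU hV R Δ] at hlower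
  have hu := abs_le.1 (abs_minner_mul_transpose_le hU hV Δ)
  have hm1 := minner_le_frobNorm_mul (projT U V R) (projT U V Δ)
  have hm2 := (minner_le_specNorm_mul_nucNorm (projTperp U V R) (projTperp U V Δ)).trans
    (mul_le_mul_of_nonneg_right hRperp (nucNorm_nonneg _))
  have hq := nucNorm_nonneg (projTperp U V Δ)
  have hρa := mul_nonneg (frobNorm_nonneg (projT U V R)) (frobNorm_nonneg (projT U V Δ))
  rw [← sq_abs, mul_assoc, ← mul_pow, ← mul_pow]
  refine pow_le_pow_left₀ (abs_nonneg _) (abs_le.2 ⟨?_, ?_⟩) 2 <;> nlinarith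

/-- Bound on the change of the data-fit term between the convex
minimizer and the nonconvex point. -/
theorem sqrtMC_data_fit_change_bound (n r : ℕ) (hn : 0 < n) (hr : 0 < r) (lam : ℝ)
    (hlam : 0 < lam) (Ω : Set (Fin n × Fin n)) (M : Matrix (Fin n) (Fin n) ℝ)
    (U V : Matrix (Fin n) (Fin r) ℝ) (Sg : Fin r → ℝ)
    (Lncvx R Lcvx : Matrix (Fin n) (Fin n) ℝ)
    -- compact SVD of `L_ncvx` (in particular it has rank `r`)
    (hSVD : Lncvx = U * Matrix.diagonal Sg * Vᵀ)
    (hU : Uᵀ * U = 1) (hV : Vᵀ * V = 1) (hSg : ∀ i, 0 < Sg i)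
    -- positive residual `θ` and definition of `R`
    (hθ : 0 < frobNorm (POmega Ω (Lncvx - M)))
    (hR : (frobNorm (POmega Ω (Lncvx - M)))⁻¹ • POmega Ω (Lncvx - M) =
      (-lam) • (U * Vᵀ + R))
    (hRperp : specNorm (projTperp U V R) ≤ 1 / 2)
    -- `L_cvx` minimizes the convex objective `F`
    (hmin : ∀ L : Matrix (Fin n) (Fin n) ℝ, sqF Ω M lam Lcvx ≤ sqF Ω M lam L) :
    (frobNorm (POmega Ω (Lcvx - M)) - frobNorm (POmega Ω (Lncvx - M))) ^ 2 ≤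
      lam ^ 2 * (Real.sqrt r + 2 * frobNorm (projT U V R)) ^ 2 *
        frobNorm (projT U V (Lcvx - Lncvx)) ^ 2 :=
  sqrtMC_data_fit_change_bound_general n r lam hlam Ω M U V Sg Lncvx R Lcvx hSVD hU hV hSg hθ hR
    hRperp hmin
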